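/- Let f : ℍ → ℂ be holomorphic and define F : ℝ × ℝ_{>0} × ℝ → ℂ by F(x,y,t) := f(x+iy)·y^{m/2}·e^{−imt}. Then for every k ∈ ℤ≥0 and all x ∈ ℝ, y ∈ ℝ_{>0}, t ∈ ℝ: ((n⁺)^k F)(x,y,t) = e^{−i(m+2k)t}·y^{m/2}·Σ_{l=0}^{k} C(k,l)·(2iy)^l·(∏_{r=l+1}^{k}(m−1+r))·f^{(l)}(x+iy), where C(k,l) is the binomial coefficient, the empty product (for l = k) equals 1, and f^{(l)} is the l-th complex derivative of f. -/

import Mathlib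

open Complex MeasureTheory Filter Topology
open scoped Real

set_option autoImplicit false

noncomputable section

/-- The upper half-plane, as a subset of `ℂ`. -/
def UH : Set ℂ := {z : ℂ | 0 < z.im}

/-- The first-order differential operator `n⁺` acting on functions
`φ : ℝ × ℝ_{>0} × ℝ → ℂ` (in coordinates `(x, y, t)`):
`(n⁺φ)(x,y,t) = i·y·e^{-2it}·(∂φ/∂x − i·∂φ/∂y) + (i/2)·e^{-2it}·∂φ/∂t`. -/
def nplus (φ : ℝ → ℝ → ℝ → ℂ) : ℝ → ℝ → ℝ → ℂ := fun x y t =>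
  I * (y : ℂ) * Complex.exp (-2 * I * (t : ℂ)) *
      (deriv (fun x' => φ x' y t) x - I * deriv (fun y' => φ x y' t) y) +
    (I / 2) * Complex.exp (-2 * I * (t : ℂ)) * deriv (fun t' => φ x y t') t


/-!
On functions of the form `e^{-iμt} h(x, y)`, `n⁺` acts as `e^{-i(μ+2)t}` times the Maass raising
operator `iy(∂ₓ - i∂_y) + μ/2`. For `g` holomorphic, `iy(∂ₓ - i∂_y)` is `2iy ∂_z`, so it sends
`y^a g(x + iy)` to `a y^a g(x + iy) + 2i y^(a+1) g'(x + iy)`. Writing `(n⁺)^k F` as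
`e^{-i(m+2k)t}` times a combination of the `(2i)^l y^(m/2+l) f^(l)(x + iy)`, one application of
`n⁺` turns the coefficient `c(k,l) = C(k,l) ∏_{r=l+1}^k (m-1+r)` into
`(m+k+l) c(k,l) + c(k,l-1)`, which is `c(k+1,l)` by Pascal's rule.
-/

def raising (h : ℝ → ℝ → ℂ) (x y : ℝ) : ℂ :=
  I * y * (deriv (fun x' => h x' y) x - I * deriv (fun y' => h x y') y)

lemma nplus_cexp_mul (μ : ℂ) (h : ℝ → ℝ → ℂ) (x y t : ℝ) :
    nplus (fun x y t => cexp (-I * μ * t) * h x y) x y t =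
      cexp (-I * (μ + 2) * t) * (raising h x y + μ / 2 * h x y) := by
  have ht : HasDerivAt (fun t' : ℝ => cexp (-I * μ * t') * h x y)
      (cexp (-I * μ * t) * (-I * μ) * h x y) t := by
    simpa using (((hasDerivAt_id t).ofReal_comp.const_mul (-I * μ)).cexp).mul_const (h x y)
  simp only [nplus, raising, deriv_const_mul_field', ht.deriv]
  rw [show -I * (μ + 2) * t = -2 * I * t + -I * μ * t by ring, Complex.exp_add]
  linear_combination (-(cexp (-2 * I * t) * cexp (-I * μ * t) * μ / 2 * h x y)) * I_mul_I

lemma raising_sum {ι : Type*} (s : Finset ι) (c : ι → ℂ) (h : ι → ℝ → ℝ → ℂ) {x y : ℝ}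
    (hx : ∀ i ∈ s, DifferentiableAt ℝ (fun x' => h i x' y) x)
    (hy : ∀ i ∈ s, DifferentiableAt ℝ (fun y' => h i x y') y) :
    raising (fun x y => ∑ i ∈ s, c i * h i x y) x y = ∑ i ∈ s, c i * raising (h i) x y := by
  simp only [raising]
  rw [deriv_fun_sum fun i hi => (hx i hi).const_mul (c i),
    deriv_fun_sum fun i hi => (hy i hi).const_mul (c i)]
  simp only [deriv_const_mul_field', Finset.mul_sum, ← Finset.sum_sub_distrib]
  exact Finset.sum_congr rfl fun i _ => by ring

lemma nplus_congr {φ ψ : ℝ → ℝ → ℝ → ℂ} (h : ∀ x y t, 0 < y → φ x y t = ψ x y t)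
    {x y t : ℝ} (hy : 0 < y) : nplus φ x y t = nplus ψ x y t := by
  have hx : (fun x' => φ x' y t) = fun x' => ψ x' y t := funext fun x' => h x' y t hy
  have ht : (fun t' => φ x y t') = fun t' => ψ x y t' := funext fun t' => h x y t' hy
  have hy' : (fun y' => φ x y' t) =ᶠ[𝓝 y] fun y' => ψ x y' t :=
    eventually_of_mem (Ioi_mem_nhds hy) fun y' hy' => h x y' t hy'
  rw [nplus, nplus, hx, ht, hy'.deriv_eq]

def weightedLift (a : ℝ) (g : ℂ → ℂ) (x y : ℝ) : ℂ := ((y ^ a : ℝ) : ℂ) * g (x + y * I)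

section WeightedLift

variable {a x y : ℝ} {g : ℂ → ℂ}

lemma hasDerivAt_weightedLift_left (hg : DifferentiableAt ℂ g (x + y * I)) :
    HasDerivAt (fun x' => weightedLift a g x' y) ((y ^ a : ℝ) * deriv g (x + y * I)) x := by
  have h : HasDerivAt (fun w : ℂ => g (w + y * I)) (deriv g (x + y * I)) x := by
    simpa using hg.hasDerivAt.comp_add_const (x : ℂ) (y * I)
  exact h.comp_ofReal.const_mul _

lemma hasDerivAt_weightedLift_right (hg : DifferentiableAt ℂ g (x + y * I)) (hy : 0 < y) :
    HasDerivAt (fun y' => weightedLift a g x y')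
      ((a * y ^ (a - 1) : ℝ) * g (x + y * I) + (y ^ a : ℝ) * (deriv g (x + y * I) * I)) y := by
  have h : HasDerivAt (fun w : ℂ => g (x + w * I)) (deriv g (x + y * I) * I) y := by
    simpa [Function.comp_def] using
      hg.hasDerivAt.comp (y : ℂ) (((hasDerivAt_id (y : ℂ)).mul_const I).const_add (x : ℂ))
  exact (Real.hasDerivAt_rpow_const (Or.inl hy.ne')).ofReal_comp.mul h.comp_ofReal

lemma raising_weightedLift (hg : DifferentiableAt ℂ g (x + y * I)) (hy : 0 < y) :
    raising (weightedLift a g) x y =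
      a * weightedLift a g x y + 2 * I * weightedLift (a + 1) (deriv g) x y := by
  have hpow : y * (a * y ^ (a - 1)) = a * y ^ a := by
    rw [Real.rpow_sub_one hy.ne']; field_simp
  have hpow' : y ^ (a + 1) = y * y ^ a := by rw [Real.rpow_add_one hy.ne']; ring
  have hpowC := congrArg (fun r : ℝ => (r : ℂ)) hpow
  rw [raising, (hasDerivAt_weightedLift_left hg).deriv,
    (hasDerivAt_weightedLift_right hg hy).deriv, weightedLift, weightedLift, hpow']
  push_cast at hpowC ⊢
  linear_combination g (x + y * I) * hpowC - (y * a * ((y ^ (a - 1) : ℝ) : ℂ) * g (x + y * I) +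
    I * y * ((y ^ a : ℝ) : ℂ) * deriv g (x + y * I)) * I_mul_I

end WeightedLift

lemma differentiableAt_iteratedDeriv_of_isOpen {U : Set ℂ} {f : ℂ → ℂ} (hU : IsOpen U)
    (hf : DifferentiableOn ℂ f U) (l : ℕ) {z : ℂ} (hz : z ∈ U) :
    DifferentiableAt ℂ (iteratedDeriv l f) z := by
  rw [iteratedDeriv_eq_iterate]
  exact ((hf.analyticAt (hU.mem_nhds hz)).iterated_deriv l).differentiableAt

lemma isOpen_UH : IsOpen UH := isOpen_lt continuous_const continuous_im

def liftCoeff (m : ℂ) (k l : ℕ) : ℂ :=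
  k.choose l * ∏ r ∈ Finset.Icc (l + 1) k, (m - 1 + r)

section LiftCoeff

variable (m : ℂ) (k : ℕ)

lemma liftCoeff_succ_self : liftCoeff m k (k + 1) = 0 := by
  simp [liftCoeff]

lemma liftCoeff_succ_zero : liftCoeff m (k + 1) 0 = (m + k) * liftCoeff m k 0 := by
  simp only [liftCoeff, Nat.choose_zero_right, Finset.prod_Icc_succ_top (Nat.le_add_left 1 k)]
  push_cast
  ring

lemma liftCoeff_succ_succ {l : ℕ} (hl : l ≤ k) :
    liftCoeff m (k + 1) (l + 1) = (m + k + l + 1) * liftCoeff m k (l + 1) + liftCoeff m k l := by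
  obtain rfl | hlk := hl.eq_or_lt
  · simp [liftCoeff]
  have hIcc : Finset.Icc (l + 1) k = insert (l + 1) (Finset.Icc (l + 1 + 1) k) := by
    ext r; simp only [Finset.mem_Icc, Finset.mem_insert]; omega
  have hchoose : (k.choose (l + 1) : ℂ) * (l + 1) = k.choose l * (k - l) := by
    rw [← Nat.cast_sub hl]; exact_mod_cast Nat.choose_succ_right_eq k l
  rw [liftCoeff, liftCoeff, liftCoeff, Finset.prod_Icc_succ_top (by omega : l + 1 + 1 ≤ k + 1),
    hIcc, Finset.prod_insert (by simp), Nat.choose_succ_succ]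
  push_cast
  linear_combination (-∏ r ∈ Finset.Icc (l + 1 + 1) k, (m - 1 + r)) * hchoose

lemma sum_liftCoeff_succ (X : ℕ → ℂ) :
    ∑ l ∈ Finset.range (k + 1), liftCoeff m k l * ((m + k + l) * X l + X (l + 1)) =
      ∑ l ∈ Finset.range (k + 2), liftCoeff m (k + 1) l * X l := by
  have hsucc : ∀ l ∈ Finset.range (k + 1), liftCoeff m (k + 1) (l + 1) * X (l + 1) =
      (m + k + (l + 1 : ℕ)) * liftCoeff m k (l + 1) * X (l + 1) + liftCoeff m k l * X (l + 1) :=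
    fun l hl => by
      rw [liftCoeff_succ_succ m k (Nat.lt_succ_iff.mp (Finset.mem_range.mp hl))]; push_cast; ring
  calc _ = ∑ l ∈ Finset.range (k + 2), (m + k + l) * liftCoeff m k l * X l +
        ∑ l ∈ Finset.range (k + 1), liftCoeff m k l * X (l + 1) := by
        rw [Finset.sum_range_succ _ (k + 1), liftCoeff_succ_self, mul_zero, zero_mul, add_zero,
          ← Finset.sum_add_distrib]
        exact Finset.sum_congr rfl fun l _ => by ring
    _ = _ := by
        rw [Finset.sum_range_succ' _ (k + 1), Finset.sum_range_succ' _ (k + 1),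
          Finset.sum_congr rfl hsucc, Finset.sum_add_distrib, liftCoeff_succ_zero]
        push_cast
        ring

end LiftCoeff

def liftSeries (m : ℝ) (f : ℂ → ℂ) (k : ℕ) (x y : ℝ) : ℂ :=
  ∑ l ∈ Finset.range (k + 1),
    liftCoeff m k l * (2 * I) ^ l * weightedLift (m / 2 + l) (iteratedDeriv l f) x y

lemma raising_liftSeries (m : ℝ) {f : ℂ → ℂ} (hf : DifferentiableOn ℂ f UH) (k : ℕ) {x y : ℝ}
    (hy : 0 < y) :
    raising (liftSeries m f k) x y + (m + 2 * k) / 2 * liftSeries m f k x y =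
      liftSeries m f (k + 1) x y := by
  have hz : (x + y * I : ℂ) ∈ UH := by simpa [UH] using hy
  have hd l := differentiableAt_iteratedDeriv_of_isOpen isOpen_UH hf l hz
  unfold liftSeries
  rw [raising_sum _ _ _
    (fun l _ => (hasDerivAt_weightedLift_left (hd l)).differentiableAt)
    (fun l _ => (hasDerivAt_weightedLift_right (hd l) hy).differentiableAt)]
  simp only [raising_weightedLift (hd _) hy, ← iteratedDeriv_succ]
  rw [Finset.mul_sum, ← Finset.sum_add_distrib]
  convert sum_liftCoeff_succ (m : ℂ) k
    (fun l => (2 * I) ^ l * weightedLift (m / 2 + l) (iteratedDeriv l f) x y) using 1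
  · refine Finset.sum_congr rfl fun l _ => ?_
    rw [Nat.cast_succ, ← add_assoc]
    push_cast
    ring
  · exact Finset.sum_congr rfl fun l _ => by ring

lemma iterate_nplus_eq_liftSeries (m : ℝ) {f : ℂ → ℂ} (hf : DifferentiableOn ℂ f UH) (k : ℕ)
    {x y t : ℝ} (hy : 0 < y) :
    (nplus^[k] fun x y t => f (x + y * I) * ((y ^ (m / 2) : ℝ) : ℂ) * cexp (-I * m * t)) x y t =
      cexp (-I * (m + 2 * k) * t) * liftSeries m f k x y := by
  induction k generalizing x y t with
  | zero =>
    rw [Function.iterate_zero_apply, liftSeries, Finset.sum_range_one, liftCoeff,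
      Finset.Icc_eq_empty (by omega), Finset.prod_empty, Nat.choose_self, weightedLift,
      iteratedDeriv_zero]
    simp only [Nat.cast_zero, Nat.cast_one, mul_zero, add_zero]
    ring
  | succ k ih =>
    rw [Function.iterate_succ_apply', nplus_congr (fun x y t hy => ih hy) hy, nplus_cexp_mul,
      raising_liftSeries m hf k hy]
    congr 3
    push_cast
    ring

theorem stmt19_general (m : ℝ)
    (f : ℂ → ℂ) (hf : DifferentiableOn ℂ f UH)
    (k : ℕ) (x : ℝ) (y : ℝ) (hy : 0 < y) (t : ℝ) :
    (nplus^[k] fun x' y' t' =>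
        f ((x' : ℂ) + (y' : ℂ) * I) * ((y' ^ (m / 2) : ℝ) : ℂ) *
          Complex.exp (-I * (m : ℂ) * (t' : ℂ))) x y t =
      Complex.exp (-I * ((m : ℂ) + 2 * (k : ℂ)) * (t : ℂ)) * ((y ^ (m / 2) : ℝ) : ℂ) *
        ∑ l ∈ Finset.range (k + 1), (k.choose l : ℂ) * (2 * I * (y : ℂ)) ^ l *
          (∏ r ∈ Finset.Icc (l + 1) k, ((m : ℂ) - 1 + (r : ℂ))) *
          iteratedDeriv l f ((x : ℂ) + (y : ℂ) * I) := by
  rw [iterate_nplus_eq_liftSeries m hf k hy, liftSeries, Finset.mul_sum, Finset.mul_sum]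
  refine Finset.sum_congr rfl fun l _ => ?_
  rw [weightedLift, liftCoeff, Real.rpow_add hy, Real.rpow_natCast]
  push_cast
  ring

theorem stmt19 (m : ℝ) (j : ℕ) (hm : m = 3 / 2 + j)
    (f : ℂ → ℂ) (hf : DifferentiableOn ℂ f UH)
    (k : ℕ) (x : ℝ) (y : ℝ) (hy : 0 < y) (t : ℝ) :
    (nplus^[k] fun x' y' t' =>
        f ((x' : ℂ) + (y' : ℂ) * I) * ((y' ^ (m / 2) : ℝ) : ℂ) *
          Complex.exp (-I * (m : ℂ) * (t' : ℂ))) x y t =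
      Complex.exp (-I * ((m : ℂ) + 2 * (k : ℂ)) * (t : ℂ)) * ((y ^ (m / 2) : ℝ) : ℂ) *
        ∑ l ∈ Finset.range (k + 1), (k.choose l : ℂ) * (2 * I * (y : ℂ)) ^ l *
          (∏ r ∈ Finset.Icc (l + 1) k, ((m : ℂ) - 1 + (r : ℂ))) *
          iteratedDeriv l f ((x : ℂ) + (y : ℂ) * I) :=
  stmt19_general m f hf k x y hy t
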